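/- Fix d > 0 and c ∈ ℝ, and let w(u) = (1/2)·√(d/π)·e^{-d(log|u|)²}/|u|^c for u ≠ 0. Then the Krein condition holds for w: ∫_{-∞}^{∞} log w(u)/(1+u²) du > −∞, i.e. the function u ↦ log w(u)/(1+u²) is Lebesgue-integrable on ℝ. -/

import Mathlib

/-!
Off the null set `{0}`, `log w(u) = log (√(d/π)/2) - d (log|u|)² - c log|u|`, so it suffices that
`(log|u|)ⁿ / (1 + u²)` is integrable for every `n`. This function is even, and on `(0, ∞)` the
estimate `log x ≤ x^ε / ε` with `ε = 1/(2n)` dominates it by a multiple of `u^(-1/2)` on `(0, 1]`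
and of `u^(-3/2)` on `(1, ∞)`.
-/

open MeasureTheory Real Set

lemma log_pow_le_mul_rpow_half (n : ℕ) {x : ℝ} (hx : 1 ≤ x) :
    log x ^ n ≤ (2 * n) ^ n * x ^ (1 / 2 : ℝ) := by
  rcases eq_or_ne n 0 with rfl | hn
  · simpa using one_le_rpow hx (by norm_num : (0 : ℝ) ≤ 1 / 2)
  have hε : (0 : ℝ) < 1 / (2 * n) := by positivity
  calc log x ^ n ≤ (x ^ (1 / (2 * n) : ℝ) / (1 / (2 * n))) ^ n :=
        pow_le_pow_left₀ (log_nonneg hx) (log_le_rpow_div (by linarith) hε) n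
    _ = (2 * n) ^ n * x ^ (1 / 2 : ℝ) := by
        rw [div_pow, ← rpow_natCast (x ^ _), ← rpow_mul (by linarith), one_div_pow, div_div_eq_mul_div, div_one, mul_comm]
        congr 2
        field_simp

lemma abs_log_pow_le_mul_rpow_neg_half (n : ℕ) {x : ℝ} (hx₀ : 0 < x) (hx₁ : x ≤ 1) :
    |log x| ^ n ≤ (2 * n) ^ n * x ^ (-(1 / 2) : ℝ) := by
  rw [abs_of_nonpos (log_nonpos hx₀.le hx₁), ← log_inv, rpow_neg hx₀.le, ← inv_rpow hx₀.le]
  exact log_pow_le_mul_rpow_half n ((one_le_inv₀ hx₀).2 hx₁)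

lemma integrableOn_Ioi_log_pow_div_one_add_sq (n : ℕ) :
    IntegrableOn (fun u : ℝ => log u ^ n / (1 + u ^ 2)) (Ioi 0) := by
  have hmeas : AEStronglyMeasurable (fun u : ℝ => log u ^ n / (1 + u ^ 2)) :=
    ((measurable_log.pow_const n).div (by fun_prop)).aestronglyMeasurable
  have hnorm (u : ℝ) : ‖log u ^ n / (1 + u ^ 2)‖ = |log u| ^ n / (1 + u ^ 2) := by
    rw [norm_div, norm_pow, norm_eq_abs, norm_of_nonneg (by positivity)]
  rw [← Ioc_union_Ioi_eq_Ioi zero_le_one, integrableOn_union]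
  constructor
  · have hdom : IntegrableOn (fun u : ℝ => (2 * n) ^ n * u ^ (-(1 / 2) : ℝ)) (Ioc 0 1) := by
      have h := intervalIntegral.intervalIntegrable_rpow' (a := 0) (b := 1) (r := -(1 / 2))
        (by norm_num)
      rw [intervalIntegrable_iff_integrableOn_Ioc_of_le zero_le_one] at h
      exact h.const_mul _
    refine hdom.mono' hmeas.restrict (ae_restrict_of_forall_mem measurableSet_Ioc ?_)
    rintro u ⟨hu₀, hu₁⟩
    calc ‖log u ^ n / (1 + u ^ 2)‖ ≤ |log u| ^ n := by
          rw [hnorm]; exact div_le_self (by positivity) (by nlinarith)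
      _ ≤ (2 * n) ^ n * u ^ (-(1 / 2) : ℝ) := abs_log_pow_le_mul_rpow_neg_half n hu₀ hu₁
  · have hdom : IntegrableOn (fun u : ℝ => (2 * n) ^ n * u ^ (-(3 / 2) : ℝ)) (Ioi 1) :=
      (integrableOn_Ioi_rpow_of_lt (by norm_num) one_pos).const_mul _
    refine hdom.mono' hmeas.restrict (ae_restrict_of_forall_mem measurableSet_Ioi ?_)
    intro u (hu : 1 < u)
    have hu₀ : 0 < u := one_pos.trans hu
    calc ‖log u ^ n / (1 + u ^ 2)‖ ≤ (2 * n) ^ n * u ^ (1 / 2 : ℝ) / u ^ 2 := by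
          rw [hnorm, abs_of_nonneg (log_nonneg hu.le)]
          exact div_le_div₀ (by positivity) (log_pow_le_mul_rpow_half n hu.le) (by positivity)
            (by linarith)
      _ = (2 * n) ^ n * u ^ (-(3 / 2) : ℝ) := by
          rw [mul_div_assoc, ← rpow_natCast u 2, ← rpow_sub hu₀]
          norm_num

lemma integrable_comp_abs_of_integrableOn_Ioi {E : Type*} [NormedAddCommGroup E] {f : ℝ → E}
    (hf : IntegrableOn f (Ioi 0)) : Integrable (fun u => f |u|) := by
  have hpos : IntegrableOn (fun u => f |u|) (Ioi 0) :=
    hf.congr_fun (fun u (hu : 0 < u) => by rw [abs_of_pos hu]) measurableSet_Ioi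
  rw [← integrableOn_univ, ← Iio_union_Ici (a := 0), integrableOn_union,
    integrableOn_Ici_iff_integrableOn_Ioi]
  refine ⟨?_, hpos⟩
  rw [← neg_zero] at hpos
  simpa only [abs_neg] using hpos.comp_neg_Iio

lemma integrable_log_abs_pow_div_one_add_sq (n : ℕ) :
    Integrable (fun u : ℝ => log |u| ^ n / (1 + u ^ 2)) := by
  simpa only [sq_abs] using
    integrable_comp_abs_of_integrableOn_Ioi (integrableOn_Ioi_log_pow_div_one_add_sq n)

/-- (Example 1, (iii)) The log-normal type density
`w(u) = (1/2)√(d/π) e^{-d (log|u|)²} / |u|^c` satisfies the Krein condition: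
`u ↦ log w(u) / (1 + u²)` is Lebesgue-integrable on `ℝ`. -/
theorem lognormal_krein_condition (d c : ℝ) (hd : 0 < d)
    (w : ℝ → ℝ)
    (hw : w = fun u : ℝ =>
      (1 / 2) * Real.sqrt (d / π) * Real.exp (-d * Real.log |u| ^ 2) / |u| ^ c) :
    Integrable (fun u : ℝ => Real.log (w u) / (1 + u ^ 2)) volume := by
  set K := log ((1 / 2) * √(d / π))
  have hA : (1 / 2) * √(d / π) ≠ 0 := by have := div_pos hd pi_pos; positivity
  have hlog_w {u : ℝ} (hu : u ≠ 0) : log (w u) = K - d * log |u| ^ 2 - c * log |u| := by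
    have hu' : 0 < |u| := abs_pos.2 hu
    rw [hw, log_div (by positivity) (rpow_pos_of_pos hu' c).ne', log_mul hA (exp_ne_zero _),
      log_exp, log_rpow hu']
    ring
  have hint := ((integrable_inv_one_add_sq.const_mul K).sub
    ((integrable_log_abs_pow_div_one_add_sq 2).const_mul d)).sub
    ((integrable_log_abs_pow_div_one_add_sq 1).const_mul c)
  refine hint.congr ?_
  filter_upwards [Measure.ae_ne volume 0] with u hu
  simp only [Pi.sub_apply, pow_one, hlog_w hu]
  ring
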